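/- Let C be a finite set of candidates, PW ⊆ C a nonempty set of possible winners, and P_i a preference order on C. Let c_j, c_k ∈ PW be two possible winners with P_i(c_j,c_k) (a safe query). Then no preference order P' on C with P'(c_k,c_j) locally dominates P_i (given PW); consequently, a voter queried on the pair (c_j,c_k) answers c_j ≻ c_k according to her current preference order P_i and does not change it. -/

import Mathlib

/-!
Give the two safe candidates `cj` and `ck` a head start of `|C|` points each and everyone else
nothing. Since a single ballot awards at most `|C|` Borda points, only `cj` or `ck` can win, so
this is a possible world, and the ballot alone decides between them: `Pi` elects `cj` while any
`P'` with `P' ck cj` elects `ck`, which `Pi` ranks strictly lower. So `P'` is not even weakly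
better than `Pi` in every possible world.
-/

/-- A preference order: a strict total order on candidates. -/
def IsPref {C : Type*} (P : C → C → Prop) : Prop :=
  (∀ a b : C, a ≠ b → P a b ∨ P b a) ∧ (∀ a : C, ¬ P a a) ∧
    ∀ a b c : C, P a b → P b c → P a c

/-- The Borda score that preference order `P` gives candidate `c`. -/
noncomputable def borda {C : Type*} [Fintype C] (P : C → C → Prop) (c : C) : ℕ :=
  1 + Set.ncard {c' : C | P c c'}

/-- `c` is the outcome `F(s, P)`: it beats every other candidate either in total score
`s + borda`, or on equal total score by the tie-breaking order `tb`. -/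
def IsWinner {C : Type*} [Fintype C] (tb : C → C → Prop) (s : C → ℕ)
    (P : C → C → Prop) (c : C) : Prop :=
  ∀ c' : C, c' ≠ c →
    s c' + borda P c' < s c + borda P c ∨
      (s c' + borda P c' = s c + borda P c ∧ tb c c')

/-- `s` is a possible world for the set `PW` of possible winners. -/
def PossibleWorld {C : Type*} [Fintype C] (tb : C → C → Prop) (PW : Set C)
    (s : C → ℕ) : Prop :=
  ∀ R : C → C → Prop, IsPref R → ∀ c : C, IsWinner tb s R c → c ∈ PW

/-- `P'` locally dominates `P` given the possible-winner set `PW`. -/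
def LocDom {C : Type*} [Fintype C] (tb : C → C → Prop) (PW : Set C)
    (P' P : C → C → Prop) : Prop :=
  (∀ s : C → ℕ, PossibleWorld tb PW s →
      ∀ w' w : C, IsWinner tb s P' w' → IsWinner tb s P w → w' = w ∨ P w' w) ∧
  ∃ s : C → ℕ, PossibleWorld tb PW s ∧
      ∃ w' w : C, IsWinner tb s P' w' ∧ IsWinner tb s P w ∧ P w' w

/-- The (closed) segment `[c, P, c']` of candidates between `c` and `c'`. -/
def seg {C : Type*} (P : C → C → Prop) (c c' : C) : Set C :=
  {d : C | (d = c ∨ P c d) ∧ (d = c' ∨ P d c')}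

namespace IsPref

variable {C : Type*} {P : C → C → Prop}

theorem irrefl (hP : IsPref P) (a : C) : ¬ P a a := hP.2.1 a

theorem trans (hP : IsPref P) {a b c : C} : P a b → P b c → P a c := hP.2.2 a b c

end IsPref

section Borda

variable {C : Type*} [Fintype C] {P : C → C → Prop}

theorem one_le_borda (P : C → C → Prop) (c : C) : 1 ≤ borda P c :=
  Nat.le_add_right 1 _

theorem borda_le_card (hirr : ∀ a, ¬ P a a) (a : C) : borda P a ≤ Fintype.card C := by
  have hss : {c' : C | P a c'} ⊂ Set.univ :=
    Set.ssubset_univ_iff.mpr fun h => hirr a (h.symm ▸ Set.mem_univ a :)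
  have := Set.ncard_lt_ncard hss Set.finite_univ
  rw [Set.ncard_univ, Nat.card_eq_fintype_card] at this
  unfold borda
  omega

theorem borda_lt_borda (hirr : ∀ a, ¬ P a a) (htrans : ∀ {a b c}, P a b → P b c → P a c)
    {a b : C} (h : P a b) : borda P b < borda P a := by
  have hss : {c' : C | P b c'} ⊂ {c' : C | P a c'} :=
    ⟨fun _ hx => htrans h hx, fun hsub => hirr b (hsub h)⟩
  have := Set.ncard_lt_ncard hss (Set.toFinite _)
  unfold borda
  omega

end Borda

section PairBoost

variable {C : Type*} [Fintype C] [DecidableEq C]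

def pairBoost (a b : C) : C → ℕ := fun c => if c = a ∨ c = b then Fintype.card C else 0

theorem pairBoost_comm (a b : C) : pairBoost a b = pairBoost b a := by
  ext c
  simp only [pairBoost, or_comm]

theorem pairBoost_left (a b : C) : pairBoost a b a = Fintype.card C := by
  simp [pairBoost]

theorem pairBoost_right (a b : C) : pairBoost a b b = Fintype.card C := by
  simp [pairBoost]

theorem pairBoost_of_ne {a b c : C} (ha : c ≠ a) (hb : c ≠ b) : pairBoost a b c = 0 := by
  simp [pairBoost, ha, hb]

theorem isWinner_pairBoost {R : C → C → Prop} (hirr : ∀ a, ¬ R a a)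
    (htrans : ∀ {a b c}, R a b → R b c → R a c) (tb : C → C → Prop) {a b : C}
    (hab : R a b) : IsWinner tb (pairBoost a b) R a := by
  intro c hca
  left
  rw [pairBoost_left]
  by_cases hcb : c = b
  · subst hcb
    rw [pairBoost_right]
    have := borda_lt_borda hirr htrans hab
    omega
  · rw [pairBoost_of_ne hca hcb]
    have := borda_le_card hirr c
    have := one_le_borda R a
    omega

theorem eq_or_eq_of_isWinner_pairBoost {R : C → C → Prop} (hirr : ∀ a, ¬ R a a)
    {tb : C → C → Prop} {a b c : C} (hc : IsWinner tb (pairBoost a b) R c) :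
    c = a ∨ c = b := by
  by_contra! hne
  have hbeat := hc a (Ne.symm hne.1)
  rw [pairBoost_left, pairBoost_of_ne hne.1 hne.2] at hbeat
  have := borda_le_card hirr c
  have := one_le_borda R a
  omega

theorem possibleWorld_pairBoost (tb : C → C → Prop) {PW : Set C} {a b : C} (ha : a ∈ PW)
    (hb : b ∈ PW) : PossibleWorld tb PW (pairBoost a b) := by
  intro R hR c hc
  rcases eq_or_eq_of_isWinner_pairBoost hR.irrefl hc with rfl | rfl
  exacts [ha, hb]

end PairBoost

theorem statement13_general {C : Type*} [Fintype C]
    (tb : C → C → Prop)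
    (PW : Set C)
    (Pi : C → C → Prop) (hPi : IsPref Pi)
    (cj ck : C) (hcj : cj ∈ PW) (hck : ck ∈ PW) (hjk : Pi cj ck) :
    ∀ P' : C → C → Prop, IsPref P' → P' ck cj → ¬ LocDom tb PW P' Pi := by
  classical
  intro P' hP' hkj ⟨hweak, _⟩
  have hWi : IsWinner tb (pairBoost cj ck) Pi cj := isWinner_pairBoost hPi.irrefl hPi.trans tb hjk
  have hW' : IsWinner tb (pairBoost cj ck) P' ck := by
    rw [pairBoost_comm]
    exact isWinner_pairBoost hP'.irrefl hP'.trans tb hkj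
  rcases hweak _ (possibleWorld_pairBoost tb hcj hck) ck cj hW' hWi with h | h
  · exact hPi.irrefl cj (h ▸ hjk)
  · exact hPi.irrefl cj (hPi.trans hjk h)

theorem statement13 {C : Type*} [Fintype C]
    (tb : C → C → Prop) (htb : IsPref tb)
    (PW : Set C) (hPW : PW.Nonempty)
    (Pi : C → C → Prop) (hPi : IsPref Pi)
    (cj ck : C) (hcj : cj ∈ PW) (hck : ck ∈ PW) (hjk : Pi cj ck) :
    ∀ P' : C → C → Prop, IsPref P' → P' ck cj → ¬ LocDom tb PW P' Pi :=
  statement13_general tb PW Pi hPi cj ck hcj hck hjk
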